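/- Let (X_0, X_1, …, X_n) be a random vector whose distribution is a multivariate Gaussian on ℝ^{n+1} whose covariance matrix has all entries nonnegative, and let c_1, …, c_n ≥ 0 be nonnegative real numbers. Then Cov( exp(X_0), exp(−Σ_{i=1}^n c_i exp(X_i)) ) ≤ 0. -/

import Mathlib

/-!
Write `X = m + A ξ` with `ξ` a standard Gaussian vector and `A = √C`. By the Cameron–Martin
formula, weighting the law of `ξ` by `exp (⟪a, ξ⟫ - ‖a‖² / 2)` translates it by `a`; since
`exp X₀` is `E[exp X₀]` times this weight for `a` the `0`-th row of `A`, we get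
`E[exp X₀ · G X] = E[exp X₀] · E[G (X + C e₀)]`. The translation `C e₀` has nonnegative entries
and `G x = exp (-∑ cᵢ exp xᵢ₊₁)` is decreasing, so `E[exp X₀ · G X] ≤ E[exp X₀] · E[G X]`.
-/

open MeasureTheory ProbabilityTheory

/-- The multivariate Gaussian measure on `ℝ^n` (modelled as `Fin n → ℝ`) with mean
vector `m` and positive semidefinite covariance matrix `C`: the pushforward of the
`n`-fold product of standard Gaussians under `x ↦ m + √C x`, where `√C` is the
positive semidefinite square root of `C`. -/
noncomputable def multivariateGaussian {n : ℕ} (m : Fin n → ℝ)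
    {C : Matrix (Fin n) (Fin n) ℝ} (hC : C.PosSemidef) : Measure (Fin n → ℝ) :=
  Measure.map (fun x => m + (hC.1.eigenvectorUnitary * Matrix.diagonal (Real.sqrt ∘ hC.1.eigenvalues) *
      (star hC.1.eigenvectorUnitary : Matrix (Fin n) (Fin n) ℝ)).mulVec x)
    (Measure.pi fun _ : Fin n => gaussianReal 0 1)

open Real Matrix Finset
open scoped ENNReal MatrixOrder

namespace ProbabilityTheory

lemma gaussianReal_eq_withDensity_exp (a : ℝ) :
    gaussianReal a 1 =
      (gaussianReal 0 1).withDensity fun t => ENNReal.ofReal (exp (a * t - a ^ 2 / 2)) := by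
  have h1 : (1 : NNReal) ≠ 0 := one_ne_zero
  rw [gaussianReal_of_var_ne_zero _ h1, gaussianReal_of_var_ne_zero _ h1,
    ← withDensity_mul _ (measurable_gaussianPDF 0 1) (by fun_prop)]
  congr 1
  funext t
  rw [Pi.mul_apply, gaussianPDF, gaussianPDF, ← ENNReal.ofReal_mul (gaussianPDFReal_nonneg 0 1 t),
    gaussianPDFReal, gaussianPDFReal, mul_assoc _ (exp _), ← exp_add]
  congr 3
  push_cast
  ring

lemma pi_gaussianReal_eq_withDensity_exp {ι : Type*} [Fintype ι] (a : ι → ℝ) :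
    Measure.pi (fun i => gaussianReal (a i) 1) =
      (Measure.pi fun _ : ι => gaussianReal 0 1).withDensity
        fun x => ∏ i, ENNReal.ofReal (exp (a i * x i - a i ^ 2 / 2)) := by
  classical
  refine Measure.pi_eq fun s hs => ?_
  have hpi : MeasurableSet (Set.univ.pi s) := .univ_pi hs
  have hdens : ∀ i, Measurable
      ((s i).indicator fun t => ENNReal.ofReal (exp (a i * t - a i ^ 2 / 2))) :=
    fun i => Measurable.indicator (by fun_prop) (hs i)
  have hind : (Set.univ.pi s).indicator
        (fun x : ι → ℝ => ∏ i, ENNReal.ofReal (exp (a i * x i - a i ^ 2 / 2))) =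
      fun x => ∏ i, (s i).indicator (fun t => ENNReal.ofReal (exp (a i * t - a i ^ 2 / 2))) (x i) := by
    ext x
    simp only [Set.indicator_apply, Set.mem_univ_pi]
    rw [Finset.prod_ite_zero]
    simp
  rw [withDensity_apply _ hpi, ← lintegral_indicator hpi, hind,
    lintegral_prod_eq_prod_lintegral_of_indepFun _ _
      (iIndepFun_pi fun i => (hdens i).aemeasurable)
      fun i => (hdens i).comp (measurable_pi_apply i)]
  refine Finset.prod_congr rfl fun i _ => ?_
  rw [(measurePreserving_eval _ i).lintegral_comp (hdens i), lintegral_indicator (hs i),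
    gaussianReal_eq_withDensity_exp (a i), withDensity_apply _ (hs i)]

/-- Cameron–Martin formula for the standard Gaussian measure on `ι → ℝ`. -/
lemma lintegral_exp_mul_pi_gaussianReal {ι : Type*} [Fintype ι] (a : ι → ℝ)
    {H : (ι → ℝ) → ℝ≥0∞} (hH : Measurable H) :
    ∫⁻ x, ENNReal.ofReal (exp (∑ i, a i * x i - (∑ i, a i ^ 2) / 2)) * H x
        ∂Measure.pi (fun _ : ι => gaussianReal 0 1) =
      ∫⁻ x, H (x + a) ∂Measure.pi (fun _ : ι => gaussianReal 0 1) := by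
  have hshift : MeasurePreserving (· + a) (Measure.pi fun _ : ι => gaussianReal 0 1)
      (Measure.pi fun i => gaussianReal (a i) 1) :=
    measurePreserving_pi _ _ fun i =>
      ⟨measurable_add_const _, by rw [gaussianReal_map_add_const, zero_add]⟩
  rw [hshift.lintegral_comp hH, pi_gaussianReal_eq_withDensity_exp a,
    lintegral_withDensity_eq_lintegral_mul _ (by fun_prop) hH]
  refine lintegral_congr fun x => ?_
  rw [Pi.mul_apply, ← ENNReal.ofReal_prod_of_nonneg fun i _ => (exp_pos _).le, ← exp_sum,
    Finset.sum_sub_distrib, Finset.sum_div]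

section AffineImage

variable {ι : Type*} [Fintype ι] (m : ι → ℝ) (A : Matrix ι ι ℝ)

/-- The law of `m + A ξ` for a standard Gaussian vector `ξ`; its covariance matrix is `A * Aᵀ`. -/
noncomputable def affineStdGaussian : Measure (ι → ℝ) :=
  (Measure.pi fun _ : ι => gaussianReal 0 1).map fun x => m + A *ᵥ x

instance : IsProbabilityMeasure (affineStdGaussian m A) :=
  Measure.isProbabilityMeasure_map (by fun_prop)

lemma lintegral_exp_mul_affineStdGaussian (i : ι) {H : (ι → ℝ) → ℝ≥0∞} (hH : Measurable H) :
    ∫⁻ y, ENNReal.ofReal (exp (y i)) * H y ∂affineStdGaussian m A =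
      ENNReal.ofReal (exp (m i + (∑ k, A i k ^ 2) / 2)) *
        ∫⁻ y, H (y + fun j => (A * Aᵀ) j i) ∂affineStdGaussian m A := by
  have hT : Measurable fun x : ι → ℝ => m + A *ᵥ x := by fun_prop
  have hsplit : ∀ x : ι → ℝ, ENNReal.ofReal (exp ((m + A *ᵥ x) i)) =
      ENNReal.ofReal (exp (m i + (∑ k, A i k ^ 2) / 2)) *
        ENNReal.ofReal (exp (∑ k, A i k * x k - (∑ k, A i k ^ 2) / 2)) := by
    intro x
    rw [← ENNReal.ofReal_mul (exp_pos _).le, ← exp_add]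
    congr 2
    simp only [Pi.add_apply, mulVec, dotProduct]
    ring
  have hshift : ∀ x : ι → ℝ, m + A *ᵥ (x + A i) = (m + A *ᵥ x) + fun j => (A * Aᵀ) j i := by
    intro x
    ext j
    simp only [mulVec_add, Pi.add_apply, mulVec, dotProduct, mul_apply, transpose_apply]
    ring
  rw [affineStdGaussian, lintegral_map (by fun_prop) hT, lintegral_map (by fun_prop) hT]
  simp_rw [hsplit, mul_assoc]
  rw [lintegral_const_mul _ (by fun_prop),
    lintegral_exp_mul_pi_gaussianReal (A i) (H := fun x => H (m + A *ᵥ x)) (hH.comp hT)]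
  simp only [hshift]

lemma lintegral_exp_affineStdGaussian (i : ι) :
    ∫⁻ y, ENNReal.ofReal (exp (y i)) ∂affineStdGaussian m A =
      ENNReal.ofReal (exp (m i + (∑ k, A i k ^ 2) / 2)) := by
  simpa using lintegral_exp_mul_affineStdGaussian m A i (H := 1) measurable_const

theorem integral_exp_mul_le_of_antitone (i : ι) {G : (ι → ℝ) → ℝ} (hGm : Measurable G)
    (hG0 : 0 ≤ G) (hGi : Integrable G (affineStdGaussian m A)) (hG : Antitone G)
    (hA : ∀ j, 0 ≤ (A * Aᵀ) j i) :
    ∫ y, exp (y i) * G y ∂affineStdGaussian m A ≤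
      (∫ y, exp (y i) ∂affineStdGaussian m A) * ∫ y, G y ∂affineStdGaussian m A := by
  have hle : ∫⁻ y, ENNReal.ofReal (exp (y i) * G y) ∂affineStdGaussian m A ≤
      (∫⁻ y, ENNReal.ofReal (exp (y i)) ∂affineStdGaussian m A) *
        ∫⁻ y, ENNReal.ofReal (G y) ∂affineStdGaussian m A := by
    simp_rw [ENNReal.ofReal_mul (exp_pos _).le]
    rw [lintegral_exp_mul_affineStdGaussian m A i (by fun_prop), lintegral_exp_affineStdGaussian]
    gcongr with y
    exact hG (le_add_of_nonneg_right hA)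
  rw [integral_eq_lintegral_of_nonneg_ae (.of_forall fun y => mul_nonneg (exp_pos _).le (hG0 y))
      (by fun_prop),
    integral_eq_lintegral_of_nonneg_ae (.of_forall fun y => (exp_pos _).le)
      (measurable_pi_apply i).exp.aestronglyMeasurable,
    integral_eq_lintegral_of_nonneg_ae (.of_forall hG0) hGm.aestronglyMeasurable,
    ← ENNReal.toReal_mul]
  refine ENNReal.toReal_mono (ENNReal.mul_ne_top ?_ hGi.lintegral_lt_top.ne) hle
  rw [lintegral_exp_affineStdGaussian]
  exact ENNReal.ofReal_ne_top

end AffineImage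

end ProbabilityTheory

lemma multivariateGaussian_eq_affineStdGaussian {n : ℕ} (m : Fin n → ℝ)
    {C : Matrix (Fin n) (Fin n) ℝ} (hC : C.PosSemidef) :
    multivariateGaussian m hC = affineStdGaussian m (CFC.sqrt C) := by
  rw [CFC.sqrt_eq_real_sqrt C hC.nonneg, cfcₙ_eq_cfc (hf0 := sqrt_zero), hC.1.cfc_eq,
    IsHermitian.cfc, Unitary.conjStarAlgAut_apply]
  rfl

lemma Matrix.PosSemidef.sqrt_mul_transpose_sqrt {ι : Type*} [Fintype ι] [DecidableEq ι]
    {C : Matrix ι ι ℝ} (hC : C.PosSemidef) : CFC.sqrt C * (CFC.sqrt C)ᵀ = C := by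
  rw [← conjTranspose_eq_transpose_of_trivial, ← star_eq_conjTranspose,
    (CFC.sqrt_nonneg C).isSelfAdjoint.star_eq, CFC.sqrt_mul_sqrt_self C hC.nonneg]

/-- **Negative correlation for associated Gaussian vectors.** Let
`(X₀, X₁, …, Xₙ)` be a multivariate Gaussian vector whose covariance matrix has all
entries nonnegative, and let `c₁, …, cₙ ≥ 0`. Then
`Cov(exp(X₀), exp(−∑ᵢ cᵢ exp(Xᵢ))) ≤ 0`, where
`Cov(U, V) = E[U·V] − E[U]·E[V]`. -/
theorem cov_exp_exp_neg_sum_nonpos {n : ℕ} (m : Fin (n + 1) → ℝ)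
    {C : Matrix (Fin (n + 1)) (Fin (n + 1)) ℝ} (hC : C.PosSemidef)
    (hCpos : ∀ i j, 0 ≤ C i j) (c : Fin n → ℝ) (hc : ∀ i, 0 ≤ c i) :
    (∫ x, Real.exp (x 0) * Real.exp (-(∑ i : Fin n, c i * Real.exp (x i.succ)))
        ∂(multivariateGaussian m hC)) -
      (∫ x, Real.exp (x 0) ∂(multivariateGaussian m hC)) *
        (∫ x, Real.exp (-(∑ i : Fin n, c i * Real.exp (x i.succ)))
          ∂(multivariateGaussian m hC)) ≤ 0 := by
  have hG_meas : Measurable fun x : Fin (n + 1) → ℝ => exp (-∑ i, c i * exp (x i.succ)) := by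
    fun_prop
  have hG_anti : Antitone fun x : Fin (n + 1) → ℝ => exp (-∑ i, c i * exp (x i.succ)) :=
    fun x y hxy => by dsimp only; gcongr with i; exacts [hc i, hxy _]
  have hG_le_one : ∀ x : Fin (n + 1) → ℝ, ‖exp (-∑ i, c i * exp (x i.succ))‖ ≤ 1 := fun x => by
    rw [norm_of_nonneg (exp_pos _).le, exp_le_one_iff, neg_nonpos]
    exact Finset.sum_nonneg fun i _ => mul_nonneg (hc i) (exp_pos _).le
  rw [sub_nonpos, multivariateGaussian_eq_affineStdGaussian]
  refine integral_exp_mul_le_of_antitone _ _ 0 hG_meas (fun _ => (exp_pos _).le)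
    (.of_bound hG_meas.aestronglyMeasurable 1 (.of_forall hG_le_one)) hG_anti fun j => ?_
  rw [hC.sqrt_mul_transpose_sqrt]
  exact hCpos j 0
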